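/- Let m ≥ 1 and M = 2^m. The number of bijective labelings L : {1,…,M} → GF(2)^m whose matrix is a reduced column echelon matrix equals M! / ∏_{l=1}^{m} (2^m − 2^{l−1}). -/

import Mathlib

/-! Composition `L ↦ f ∘ L` with a linear automorphism `f` of `GF(2)^m` is a free action on the
bijective labelings, and every orbit contains exactly one reduced column echelon matrix. Existence:
the rows that are not in the span of the rows above them form a basis (the greedy basis), and
sending it to the standard basis in reverse order produces the echelon form. Uniqueness: the pivot
rows of an echelon matrix are exactly these greedy rows, which are the same for the whole orbit,
and they carry the standard basis vectors, which pins down `f`. Hence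
`(2^m)! = |GL_m(GF(2))| · #RCE` with `|GL_m(GF(2))| = ∏ (2^m - 2^l)`. -/

/-- `p` is the pivot of column `l` of the labeling matrix `L`: it is the first
(smallest row index) nonzero entry of that column. -/
def IsPivot {m : ℕ} (L : Fin (2 ^ m) → Fin m → ZMod 2) (p : Fin (2 ^ m)) (l : Fin m) : Prop :=
  L p l ≠ 0 ∧ ∀ q, q < p → L q l = 0

/-- `L` (viewed as a `2^m × m` binary matrix) is a reduced column echelon matrix. -/
def IsRCE {m : ℕ} (L : Fin (2 ^ m) → Fin m → ZMod 2) : Prop :=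
  ∃ p : Fin m → Fin (2 ^ m),
    (∀ l, IsPivot L (p l) l) ∧
    (∀ l l' : Fin m, l' ≠ l → L (p l) l' = 0) ∧
    (∀ l l' : Fin m, (l' : ℕ) = (l : ℕ) + 1 → p l' < p l)

open Submodule Set Function

section GreedyIndices

variable {K V W ι : Type*} [DivisionRing K] [AddCommGroup V] [Module K V] [AddCommGroup W]
  [Module K W] [LinearOrder ι]

variable (K) in
def greedyIndices (v : ι → V) : Set ι :=
  {i | v i ∉ span K (v '' Iio i)}

variable {v : ι → V}

theorem mem_greedyIndices {i : ι} : i ∈ greedyIndices K v ↔ v i ∉ span K (v '' Iio i) :=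
  Iff.rfl

theorem linearIndepOn_greedyIndices [Fintype ι] : LinearIndepOn K v (greedyIndices K v) := by
  classical
  suffices ∀ s : Finset ι, LinearIndepOn K v (greedyIndices K v ∩ s) by
    simpa using this Finset.univ
  intro s
  induction s using Finset.induction_on_max with
  | empty => simp
  | insert a s hlt ih =>
    rw [Finset.coe_insert]
    by_cases ha : a ∈ greedyIndices K v
    · rw [inter_insert_of_mem ha]
      refine ih.insert fun hmem => ha (span_mono (image_mono ?_) hmem)
      exact fun x hx => hlt x hx.2
    · rwa [inter_insert_of_notMem ha]

theorem mem_span_image_greedyIndices_le [WellFoundedLT ι] (q : ι) :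
    v q ∈ span K (v '' {i ∈ greedyIndices K v | i ≤ q}) := by
  induction q using WellFoundedLT.induction with
  | _ q ih =>
  by_cases hq : q ∈ greedyIndices K v
  · exact subset_span ⟨q, ⟨hq, le_rfl⟩, rfl⟩
  · refine span_le.mpr ?_ (not_not.mp hq)
    rintro _ ⟨r, hr, rfl⟩
    refine span_mono (image_mono ?_) (ih r hr)
    exact fun i hi => ⟨hi.1, hi.2.trans hr.le⟩

theorem greedyIndices_comp_of_injective {f : V →ₗ[K] W} (hf : Injective f) :
    greedyIndices K (f ∘ v) = greedyIndices K v := by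
  ext i
  rw [mem_greedyIndices, mem_greedyIndices, image_comp, comp_apply,
    apply_mem_span_image_iff_mem_span hf]

end GreedyIndices

theorem Finset.exists_strictAnti_range_eq {α : Type*} [LinearOrder α] (s : Finset α) :
    ∃ p : Fin s.card → α, StrictAnti p ∧ Set.range p = s :=
  ⟨s.orderEmbOfFin rfl ∘ Fin.rev,
    (s.orderEmbOfFin rfl).strictMono.comp_strictAnti Fin.rev_strictAnti,
    by rw [Fin.rev_surjective.range_comp, Finset.range_orderEmbOfFin]⟩

section ReducedEchelon

variable {K ι : Type*} [DivisionRing K] [LinearOrder ι] {m : ℕ}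

structure IsReducedEchelonPivots (A : ι → Fin m → K) (p : Fin m → ι) : Prop where
  strictAnti : StrictAnti p
  row_pivot : ∀ l, A (p l) = Pi.single l 1
  eq_zero_of_lt_pivot : ∀ l q, q < p l → A q l = 0

variable {A : ι → Fin m → K} {p : Fin m → ι}

theorem IsReducedEchelonPivots.range_eq_greedyIndices (h : IsReducedEchelonPivots A p) :
    range p = greedyIndices K A := by
  have span_le_ker : ∀ q l, q ≤ p l → span K (A '' Iio q) ≤ LinearMap.ker (LinearMap.proj l) :=
    fun q l hle => span_le.mpr <| by
      rintro _ ⟨r, hr, rfl⟩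
      exact h.eq_zero_of_lt_pivot l r (hr.trans_le hle)
  ext q
  rw [mem_greedyIndices]
  constructor
  · rintro ⟨l, rfl⟩ hmem
    simpa [h.row_pivot] using span_le_ker (p l) l le_rfl hmem
  · intro hq
    by_contra hnot
    apply hq
    rw [← Finset.univ_sum_single (A q)]
    refine sum_mem fun l _ => ?_
    rcases lt_trichotomy q (p l) with hlt | rfl | hgt
    · simp [h.eq_zero_of_lt_pivot l q hlt]
    · exact absurd ⟨l, rfl⟩ hnot
    · rw [← mul_one (A q l), ← smul_eq_mul, Pi.single_smul', ← h.row_pivot l]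
      exact smul_mem _ _ (subset_span ⟨p l, hgt, rfl⟩)

theorem IsReducedEchelonPivots.eq_refl_of_comp (h : IsReducedEchelonPivots A p)
    {f : (Fin m → K) ≃ₗ[K] (Fin m → K)} {p' : Fin m → ι}
    (h' : IsReducedEchelonPivots (f ∘ A) p') : f = LinearEquiv.refl K _ := by
  have hp : p = p' := by
    rw [← h.strictAnti.range_inj h'.strictAnti, h.range_eq_greedyIndices,
      h'.range_eq_greedyIndices]
    have := greedyIndices_comp_of_injective (v := A) (f := f.toLinearMap) f.injective
    rwa [LinearEquiv.coe_toLinearMap, eq_comm] at this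
  subst hp
  refine LinearEquiv.toLinearMap_injective ((Pi.basisFun K (Fin m)).ext fun l => ?_)
  simpa [h.row_pivot l] using h'.row_pivot l

theorem exists_isReducedEchelonPivots_comp [Fintype ι] {A : ι → Fin m → K}
    (hA : span K (range A) = ⊤) :
    ∃ (f : (Fin m → K) ≃ₗ[K] (Fin m → K)) (p : Fin m → ι), IsReducedEchelonPivots (f ∘ A) p := by
  classical
  obtain ⟨k, p, hp, hrange⟩ : ∃ k, ∃ p : Fin k → ι, StrictAnti p ∧ range p = greedyIndices K A := by
    have := (greedyIndices K A).toFinset.exists_strictAnti_range_eq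
    rw [coe_toFinset] at this
    exact ⟨_, this⟩
  have hli : LinearIndependent K (A ∘ p) :=
    (linearIndepOn_range_iff hp.injective A).mp (hrange ▸ linearIndepOn_greedyIndices)
  have hspan : ⊤ ≤ span K (range (A ∘ p)) := by
    rw [← hA, range_comp, hrange, span_le]
    rintro _ ⟨q, rfl⟩
    exact span_mono (image_mono (sep_subset _ _)) (mem_span_image_greedyIndices_le q)
  let b := Module.Basis.mk hli hspan
  obtain rfl : k = m := by simpa using (Module.finrank_eq_card_basis b).symm
  have hrow : ∀ l, b.equivFun (A (p l)) = Pi.single l 1 := fun l => by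
    rw [← comp_apply (f := A), ← Module.Basis.mk_apply hli hspan l, b.equivFun_apply, b.repr_self,
      Finsupp.single_eq_pi_single]
  refine ⟨b.equivFun, p, hp, hrow, fun l q hq => ?_⟩
  have hker : span K (A '' {i ∈ greedyIndices K A | i ≤ q}) ≤
      LinearMap.ker (LinearMap.proj l ∘ₗ b.equivFun.toLinearMap) := by
    rw [span_le]
    rintro _ ⟨i, ⟨hi, hiq⟩, rfl⟩
    obtain ⟨l', rfl⟩ := hrange ▸ hi
    have hl' : l' ≠ l := by
      rintro rfl
      exact (hiq.trans_lt hq).false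
    simp [hrow, hl']
  exact hker (mem_span_image_greedyIndices_le q)

theorem card_bijective_eq_card_linearEquiv_mul [Fintype ι] :
    Nat.card {A : ι → Fin m → K // Bijective A} =
      Nat.card ((Fin m → K) ≃ₗ[K] (Fin m → K)) *
        Nat.card {A : ι → Fin m → K // Bijective A ∧ ∃ p, IsReducedEchelonPivots A p} := by
  rw [← Nat.card_prod]
  refine (Nat.card_congr (Equiv.ofBijective
    (fun fA => ⟨fA.1 ∘ fA.2.1, fA.1.bijective.comp fA.2.2.1⟩) ⟨?_, ?_⟩)).symm
  · rintro ⟨f, A, _, p, hp⟩ ⟨g, B, _, p', hp'⟩ h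
    have hcomp : f ∘ A = g ∘ B := congrArg Subtype.val h
    have hgfA : (f.trans g.symm) ∘ A = B := by
      ext q : 1
      exact g.symm_apply_eq.mpr (congrFun hcomp q)
    have hfg : f = g := by
      ext x : 1
      rw [← g.symm_apply_eq, ← LinearEquiv.trans_apply,
        hp.eq_refl_of_comp (hgfA ▸ hp' : IsReducedEchelonPivots (f.trans g.symm ∘ A) p'),
        LinearEquiv.refl_apply]
    subst hfg
    have hAB : A = B := funext fun q => f.injective (congrFun hcomp q)
    subst hAB
    rfl
  · rintro ⟨A, hA⟩
    obtain ⟨f, p, hp⟩ := exists_isReducedEchelonPivots_comp (K := K) (A := A)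
      (by rw [hA.2.range_eq, span_univ])
    refine ⟨⟨f.symm, f ∘ A, f.bijective.comp hA, p, hp⟩, Subtype.ext ?_⟩
    ext q : 1
    simp

end ReducedEchelon

theorem Nat.card_bijective_eq_factorial {α β : Type*} [Finite α] [Finite β]
    (h : Nat.card α = Nat.card β) :
    Nat.card {f : α → β // Bijective f} = (Nat.card α).factorial := by
  classical
  have := Fintype.ofFinite α
  have := Fintype.ofFinite β
  rw [Nat.card_congr Equiv.bijectiveEquiv, Nat.card_eq_fintype_card, Nat.card_eq_fintype_card,
    Fintype.card_equiv (Fintype.equivOfCardEq (by simpa only [Nat.card_eq_fintype_card] using h))]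

theorem card_linearEquiv_fin_fun {K : Type*} [Field K] [Fintype K] (m : ℕ) :
    Nat.card ((Fin m → K) ≃ₗ[K] (Fin m → K)) =
      ∏ i ∈ Finset.range m, (Fintype.card K ^ m - Fintype.card K ^ i) := by
  rw [← Nat.card_congr (Matrix.GeneralLinearGroup.toLin.trans
      (LinearMap.GeneralLinearGroup.generalLinearEquiv K (Fin m → K))).toEquiv,
    Matrix.card_GL_field,
    Fin.prod_univ_eq_prod_range (fun i => Fintype.card K ^ m - Fintype.card K ^ i)]

theorem Fin.strictAnti_of_val_eq_succ {α : Type*} [Preorder α] {m : ℕ} {p : Fin m → α}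
    (h : ∀ l l' : Fin m, (l' : ℕ) = l + 1 → p l' < p l) : StrictAnti p := by
  cases m with
  | zero => exact fun a => a.elim0
  | succ n => exact Fin.strictAnti_iff_succ_lt.mpr fun i => h _ _ (by simp)

theorem isRCE_iff {m : ℕ} {L : Fin (2 ^ m) → Fin m → ZMod 2} :
    IsRCE L ↔ ∃ p, IsReducedEchelonPivots L p := by
  constructor
  · rintro ⟨p, hpiv, hzero, hadj⟩
    refine ⟨p, ⟨Fin.strictAnti_of_val_eq_succ hadj, fun l => ?_, fun l q hq => (hpiv l).2 q hq⟩⟩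
    ext l'
    obtain rfl | hne := eq_or_ne l' l
    · rw [Pi.single_eq_same]
      exact Fin.eq_one_of_ne_zero _ (hpiv l').1
    · simp [hzero l l' hne, hne]
  · rintro ⟨p, hp⟩
    refine ⟨p, fun l => ⟨by simp [hp.row_pivot], hp.eq_zero_of_lt_pivot l⟩,
      fun l l' hne => by simp [hp.row_pivot, hne], fun l l' h => hp.strictAnti ?_⟩
    rw [Fin.lt_def]
    omega

theorem stmt_4_general (m : ℕ) :
    Nat.card {L : Fin (2 ^ m) → Fin m → ZMod 2 // Function.Bijective L ∧ IsRCE L} =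
      Nat.factorial (2 ^ m) / ∏ l ∈ Finset.range m, (2 ^ m - 2 ^ l) := by
  have hcount := card_bijective_eq_card_linearEquiv_mul (K := ZMod 2) (ι := Fin (2 ^ m)) (m := m)
  rw [Nat.card_bijective_eq_factorial (by simp), card_linearEquiv_fin_fun, ZMod.card] at hcount
  simp only [← isRCE_iff, Nat.card_fin] at hcount
  have hpos : 0 < ∏ l ∈ Finset.range m, (2 ^ m - 2 ^ l) :=
    Finset.prod_pos fun l hl =>
      Nat.sub_pos_of_lt (Nat.pow_lt_pow_right one_lt_two (Finset.mem_range.mp hl))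
  rw [hcount, Nat.mul_div_cancel_left _ hpos]

/-- The number of bijective labelings of order `m` whose matrix is a
reduced column echelon matrix equals `M! / ∏_{l=1}^{m} (2^m − 2^{l−1})` with `M = 2^m`. -/
theorem stmt_4 (m : ℕ) (hm : 1 ≤ m) :
    Nat.card {L : Fin (2 ^ m) → Fin m → ZMod 2 // Function.Bijective L ∧ IsRCE L} =
      Nat.factorial (2 ^ m) / ∏ l ∈ Finset.range m, (2 ^ m - 2 ^ l) :=
  stmt_4_general m
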